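/- arXiv:2505.07056 — 2 statements merged into one kernel-verified Lean document; each statement's English description precedes it below -/
import Mathlib

section
/- Let X be a proper metric space, Γ a group acting on X by isometries with properly discontinuous action, o ∈ X a basepoint, and F := {x ∈ X : d(x,o) ≤ d(γ·x,o) for all γ ∈ Γ} the associated Dirichlet domain. Then F is locally finite: for every compact set K ⊆ X, the set {γ ∈ Γ : (γ·K) ∩ F ≠ ∅} is finite. -/
open Pointwise

/- A point `γ • k` of the Dirichlet domain is at least as close to `o` as `γ⁻¹ • (γ • k) = k`,
so every translate of `K ⊆ closedBall o R` meeting the domain also meets `closedBall o R`,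
and proper discontinuity applies to the compact pair `K`, `closedBall o R`. -/

section Dirichlet

variable {X : Type*} [PseudoMetricSpace X] {Γ : Type*} [Group Γ] [MulAction Γ X]

theorem dist_smul_le_of_forall_dist_le {o k : X} {γ : Γ}
    (h : ∀ g : Γ, dist (γ • k) o ≤ dist (g • γ • k) o) : dist (γ • k) o ≤ dist k o := by
  simpa only [inv_smul_smul] using h γ⁻¹

theorem setOf_smul_inter_dirichlet_subset {o : X} {K : Set X} {R : ℝ}
    (hK : K ⊆ Metric.closedBall o R) :
    {γ : Γ | (γ • K) ∩ {x : X | ∀ γ : Γ, dist x o ≤ dist (γ • x) o} ≠ ∅} ⊆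
      {γ : Γ | (γ • K) ∩ Metric.closedBall o R ≠ ∅} := by
  intro γ hγ
  obtain ⟨_, ⟨k, hk, rfl⟩, hkF⟩ := Set.nonempty_iff_ne_empty.mpr hγ
  refine Set.nonempty_iff_ne_empty.mp ⟨γ • k, Set.smul_mem_smul_set hk, ?_⟩
  exact (dist_smul_le_of_forall_dist_le hkF).trans (hK hk)

end Dirichlet

theorem dirichlet_domain_locally_finite_general {X : Type*} [MetricSpace X] [ProperSpace X]
    {Γ : Type*} [Group Γ] [MulAction Γ X]
    (hdisc : ∀ K L : Set X, IsCompact K → IsCompact L →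
      {γ : Γ | (γ • K) ∩ L ≠ ∅}.Finite)
    (o : X) (K : Set X) (hK : IsCompact K) :
    {γ : Γ | (γ • K) ∩ {x : X | ∀ γ : Γ, dist x o ≤ dist (γ • x) o} ≠ ∅}.Finite := by
  obtain ⟨R, hR⟩ := hK.isBounded.subset_closedBall o
  exact (hdisc K _ hK (isCompact_closedBall o R)).subset
    (setOf_smul_inter_dirichlet_subset hR)

/-- The Dirichlet domain of a properly discontinuous isometric group action on a proper
metric space is locally finite: every compact set meets only finitely many translates. -/
theorem dirichlet_domain_locally_finite {X : Type*} [MetricSpace X] [ProperSpace X]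
    {Γ : Type*} [Group Γ] [MulAction Γ X]
    (hiso : ∀ (γ : Γ) (x y : X), dist (γ • x) (γ • y) = dist x y)
    (hdisc : ∀ K L : Set X, IsCompact K → IsCompact L →
      {γ : Γ | (γ • K) ∩ L ≠ ∅}.Finite)
    (o : X) (K : Set X) (hK : IsCompact K) :
    {γ : Γ | (γ • K) ∩ {x : X | ∀ γ : Γ, dist x o ≤ dist (γ • x) o} ≠ ∅}.Finite :=
  dirichlet_domain_locally_finite_general hdisc o K hK
end

section
/- Let X be a proper metric space, Γ a group acting on X by isometries with properly discontinuous action, o ∈ X a basepoint, and F := {x ∈ X : d(x,o) ≤ d(γ·x,o) for all γ ∈ Γ} the associated Dirichlet domain. Then for every compact set K ⊆ F and every R > 0, there exist a compact set K' ⊆ F and a finite subset S ⊆ Γ (depending on K and R) such that whenever x, y ∈ X satisfy x ∈ F, y ∈ ⋃_{γ ∈ Γ} γ·K, and d(x,y) ≤ R, one has x ∈ K' and y ∈ ⋃_{γ ∈ S} γ·K. -/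
/-!
If `x` lies in the Dirichlet domain and `y = γ • k` with `k ∈ K`, then moving `x` by `γ⁻¹`
can only increase its distance to `o`, so `d(x, o) ≤ d(γ⁻¹ • x, k) + d(k, o) = d(x, y) + d(k, o)`.
Hence `x` stays in a bounded closed part of the Dirichlet domain, `y` stays in a fixed closed
ball, and proper discontinuity leaves only finitely many `γ` with `γ • K` meeting that ball.
-/

open Pointwise Metric Set

section DirichletDomain

variable (Γ : Type*) {X : Type*} [PseudoMetricSpace X]

def dirichletDomain [SMul Γ X] (o : X) : Set X :=
  {x | ∀ γ : Γ, dist x o ≤ dist (γ • x) o}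

variable {Γ}

theorem isClosed_dirichletDomain [SMul Γ X] [ContinuousConstSMul Γ X] (o : X) :
    IsClosed (dirichletDomain Γ o) := by
  simp only [dirichletDomain, ofPred_forall]
  exact isClosed_iInter fun γ =>
    isClosed_le (continuous_id.dist continuous_const)
      ((continuous_const_smul γ).dist continuous_const)

theorem isCompact_dirichletDomain_inter_closedBall [ProperSpace X] [SMul Γ X]
    [ContinuousConstSMul Γ X] (o : X) (r : ℝ) :
    IsCompact (dirichletDomain Γ o ∩ closedBall o r) :=
  (isCompact_closedBall o r).of_isClosed_subset
    ((isClosed_dirichletDomain o).inter isClosed_closedBall) inter_subset_right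

theorem dist_le_dist_smul_add_of_mem_dirichletDomain [Group Γ] [MulAction Γ X]
    [IsIsometricSMul Γ X] {o x : X} (hx : x ∈ dirichletDomain Γ o) (γ : Γ) (k : X) :
    dist x o ≤ dist x (γ • k) + dist k o :=
  calc dist x o ≤ dist (γ⁻¹ • x) o := hx γ⁻¹
    _ ≤ dist (γ⁻¹ • x) k + dist k o := dist_triangle _ _ _
    _ = dist x (γ • k) + dist k o := by rw [← dist_smul γ, smul_inv_smul]

end DirichletDomain

theorem dirichlet_domain_uniform_local_finiteness_general {X : Type*} [MetricSpace X] [ProperSpace X]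
    {Γ : Type*} [Group Γ] [MulAction Γ X]
    (hiso : ∀ (γ : Γ) (x y : X), dist (γ • x) (γ • y) = dist x y)
    (hdisc : ∀ K L : Set X, IsCompact K → IsCompact L →
      {γ : Γ | (γ • K) ∩ L ≠ ∅}.Finite)
    (o : X) (K : Set X) (hK : IsCompact K)
    (R : ℝ) :
    ∃ K' : Set X, ∃ S : Finset Γ,
      IsCompact K' ∧ K' ⊆ {x : X | ∀ γ : Γ, dist x o ≤ dist (γ • x) o} ∧
      ∀ x y : X, x ∈ {x : X | ∀ γ : Γ, dist x o ≤ dist (γ • x) o} →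
        y ∈ ⋃ γ : Γ, γ • K → dist x y ≤ R →
        x ∈ K' ∧ y ∈ ⋃ γ ∈ S, γ • K := by
  have : IsIsometricSMul Γ X := ⟨fun γ => Isometry.of_dist_eq (hiso γ)⟩
  obtain ⟨r, hKr⟩ := hK.isBounded.subset_closedBall o
  have hS := hdisc K _ hK (isCompact_closedBall o (2 * R + r))
  refine ⟨dirichletDomain Γ o ∩ closedBall o (R + r), hS.toFinset,
    isCompact_dirichletDomain_inter_closedBall o _, inter_subset_left, ?_⟩
  rintro x y hx hy hxy
  obtain ⟨γ, k, hk, rfl⟩ : ∃ γ : Γ, ∃ k ∈ K, γ • k = y := by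
    simpa only [mem_iUnion, mem_smul_set] using hy
  have hko : dist k o ≤ r := hKr hk
  have hxo : dist x o ≤ R + r := by
    linarith [dist_le_dist_smul_add_of_mem_dirichletDomain hx γ k]
  have hyo : dist (γ • k) o ≤ 2 * R + r := by
    linarith [dist_triangle_left (γ • k) o x]
  refine ⟨⟨hx, mem_closedBall.2 hxo⟩, mem_biUnion ?_ ⟨k, hk, rfl⟩⟩
  exact hS.mem_toFinset.2
    (nonempty_iff_ne_empty.1 ⟨γ • k, smul_mem_smul_set hk, mem_closedBall.2 hyo⟩)

/-- Points of the Dirichlet domain `F` that are within distance `R` of the orbit of a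
compact subset `K ⊆ F` stay in a compact subset `K' ⊆ F`, and only finitely many
translates of `K` are involved. -/
theorem dirichlet_domain_uniform_local_finiteness {X : Type*} [MetricSpace X] [ProperSpace X]
    {Γ : Type*} [Group Γ] [MulAction Γ X]
    (hiso : ∀ (γ : Γ) (x y : X), dist (γ • x) (γ • y) = dist x y)
    (hdisc : ∀ K L : Set X, IsCompact K → IsCompact L →
      {γ : Γ | (γ • K) ∩ L ≠ ∅}.Finite)
    (o : X) (K : Set X) (hK : IsCompact K)
    (hKF : K ⊆ {x : X | ∀ γ : Γ, dist x o ≤ dist (γ • x) o})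
    (R : ℝ) (hR : 0 < R) :
    ∃ K' : Set X, ∃ S : Finset Γ,
      IsCompact K' ∧ K' ⊆ {x : X | ∀ γ : Γ, dist x o ≤ dist (γ • x) o} ∧
      ∀ x y : X, x ∈ {x : X | ∀ γ : Γ, dist x o ≤ dist (γ • x) o} →
        y ∈ ⋃ γ : Γ, γ • K → dist x y ≤ R →
        x ∈ K' ∧ y ∈ ⋃ γ ∈ S, γ • K :=
  dirichlet_domain_uniform_local_finiteness_general hiso hdisc o K hK R
end
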